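/- There exist a > 0 and λ ∈ (0,1) such that for every probability vector p, every t ∈ [0,1] and every β ∈ (1/2, 1], the following holds. Define, for continuous w : [0,1] → [0,∞), the transfer operator (Lw)(x) = Σ_{n≥1} p_n^t (x+n)^{−2β} w(1/(x+n)). If w satisfies w(x) ≤ exp(a|x−y|)·w(y) for all x, y ∈ [0,1], then the second iterate satisfies (L(Lw))(x) ≤ exp(λ·a·|x−y|)·(L(Lw))(y) for all x, y ∈ [0,1]. In other words, L² maps the cone C_a = {w ∈ C([0,1]) : w ≥ 0 and w(x) ≤ e^{a|x−y|}w(y)} into the smaller cone C_{λa}, uniformly in p, t and β. -/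

import Mathlib

open MeasureTheory Filter Set
open scoped ENNReal

instance : MeasurableSpace ℕ+ := ⊤

/-- The Gauss map `T x = 1/x - ⌊1/x⌋` (with `T 0 = 0`). -/
noncomputable def gaussMap (x : ℝ) : ℝ := if x = 0 then 0 else Int.fract x⁻¹

/-- Finite continued fraction approximants: `cfApprox n a` is the value of the
continued fraction `1/(a 0 + 1/(a 1 + ⋯))` truncated after `n` levels. -/
noncomputable def cfApprox : ℕ → (ℕ → ℕ+) → ℝ
  | 0, _ => 0
  | n + 1, a => (((a 0 : ℕ) : ℝ) + cfApprox n (fun k => a (k + 1)))⁻¹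

/-- The continued fraction coding map `Π : ℕ^ℕ → [0,1] ∖ ℚ`. -/
noncomputable def cfVal (a : ℕ → ℕ+) : ℝ := limUnder atTop (fun n => cfApprox n a)

/-- `p` is a countable probability vector `(p_n)_{n ≥ 1}`. -/
def IsProbVec (p : ℕ+ → ℝ) : Prop := (∀ n, 0 ≤ p n) ∧ HasSum p 1

/-- `m` is the Bernoulli product measure on `ℕ^ℕ` with weights `p`:
it assigns to each cylinder the product of the weights of its digits. -/
def IsBernoulli (p : ℕ+ → ℝ) (m : Measure (ℕ → ℕ+)) : Prop :=
  ∀ (n : ℕ) (i : ℕ → ℕ+),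
    m {a | ∀ k < n, a k = i k} = ENNReal.ofReal (∏ k ∈ Finset.range n, p (i k))

/-- Hausdorff dimension of a measure: `inf { dim_H A : μ A = 1 }`. -/
noncomputable def dimMeasure (μ : Measure ℝ) : ℝ≥0∞ :=
  ⨅ (A : Set ℝ) (_ : μ A = 1), dimH A


/-- The transfer operator `(L w)(x) = ∑_{n≥1} p_n^t (x+n)^{-2β} w(1/(x+n))` associated to
the potential `-β log|T'| + t f_p` for the Gauss map. -/
noncomputable def coneOp (p : ℕ+ → ℝ) (t β : ℝ) (w : ℝ → ℝ) : ℝ → ℝ :=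
  fun x => ∑' n : ℕ+,
    p n ^ t * ((x + ((n : ℕ) : ℝ)) ^ (2 * β))⁻¹ * w ((x + ((n : ℕ) : ℝ))⁻¹)

/-! Each branch `x ↦ (x+n)⁻¹` satisfies `|(x+n)⁻¹ - (y+n)⁻¹| ≤ |(x+1)⁻¹ - (y+1)⁻¹|` on `[0,∞)`,
and the weight `(x+n)^{-2β}` is log-Lipschitz with constant `2β ≤ 2`. Hence `L` turns the bound
`w x ≤ exp (a|x-y|) w y` into one with exponent `2|x-y| + a|(x+1)⁻¹ - (y+1)⁻¹|`. Feeding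
`u = (x+n)⁻¹`, `v = (y+n)⁻¹` into this exponent for the second application of `L`, the identity
`(u+1)⁻¹ = 1 - (x+n+1)⁻¹` turns `|(u+1)⁻¹ - (v+1)⁻¹|` into `|(x+n+1)⁻¹ - (y+n+1)⁻¹| ≤ |x-y|/4`:
two Gauss branches contract by `1/4`. So `L²` yields the exponent `(4 + a/4)|x-y|`, which is
`(3/4) a |x-y|` for `a = 8`. -/

open Real

section InverseBranches

variable {x y m m' : ℝ}

lemma abs_inv_sub_inv_of_pos (hx : 0 < x) (hy : 0 < y) : |x⁻¹ - y⁻¹| = |x - y| / (x * y) := by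
  rw [inv_sub_inv hx.ne' hy.ne', abs_div, abs_sub_comm, abs_of_pos (mul_pos hx hy)]

lemma abs_inv_add_sub_inv_add_le_of_le (hx : 0 ≤ x) (hy : 0 ≤ y) (hm : 0 < m) (hmm' : m ≤ m') :
    |(x + m')⁻¹ - (y + m')⁻¹| ≤ |(x + m)⁻¹ - (y + m)⁻¹| := by
  rw [abs_inv_sub_inv_of_pos (by linarith) (by linarith),
    abs_inv_sub_inv_of_pos (by linarith) (by linarith), add_sub_add_right_eq_sub,
    add_sub_add_right_eq_sub]
  exact div_le_div_of_nonneg_left (abs_nonneg _) (by nlinarith) (by nlinarith)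

lemma abs_inv_add_sub_inv_add_le_div (hx : 0 ≤ x) (hy : 0 ≤ y) (hm : 0 < m) :
    |(x + m)⁻¹ - (y + m)⁻¹| ≤ |x - y| / m ^ 2 := by
  rw [abs_inv_sub_inv_of_pos (by linarith) (by linarith), add_sub_add_right_eq_sub]
  exact div_le_div_of_nonneg_left (abs_nonneg _) (by positivity) (by nlinarith)

lemma inv_add_mem_Icc (hx : 0 ≤ x) (hm : 1 ≤ m) : (x + m)⁻¹ ∈ Icc (0 : ℝ) 1 :=
  ⟨inv_nonneg.mpr (by linarith), inv_le_one_of_one_le₀ (by linarith)⟩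

lemma inv_inv_add_one (hx : 0 < x) : (x⁻¹ + 1)⁻¹ = 1 - (x + 1)⁻¹ := by
  field_simp
  ring

end InverseBranches

lemma inv_rpow_le_exp_mul_inv_rpow {A B s : ℝ} (hA : 1 ≤ A) (hB : 0 < B) (hs : 0 ≤ s) :
    (A ^ s)⁻¹ ≤ exp (s * |A - B|) * (B ^ s)⁻¹ := by
  have hA0 : 0 < A := by linarith
  have hBA : B ≤ A * exp |A - B| := by
    nlinarith [abs_sub_comm A B, le_abs_self (B - A), add_one_le_exp |A - B|, abs_nonneg (A - B)]
  have key : B ^ s ≤ exp (s * |A - B|) * A ^ s :=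
    calc B ^ s ≤ (A * exp |A - B|) ^ s := rpow_le_rpow hB.le hBA hs
      _ = exp (s * |A - B|) * A ^ s := by
        rw [mul_rpow hA0.le (exp_pos _).le, ← exp_mul, mul_comm |A - B|, mul_comm]
  rw [← div_eq_mul_inv, le_div_iff₀ (rpow_pos_of_pos hB s),
    inv_mul_le_iff₀ (rpow_pos_of_pos hA0 s), mul_comm]
  exact key

lemma tsum_le_mul_tsum_of_le_mul {ι : Type*} {f g : ι → ℝ} {c : ℝ} (hf : ∀ i, 0 ≤ f i)
    (hg : ∀ i, 0 ≤ g i) (hfg : ∀ i, f i ≤ c * g i) (hgf : ∀ i, g i ≤ c * f i) :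
    ∑' i, f i ≤ c * ∑' i, g i := by
  by_cases hgs : Summable g
  · have hcg : Summable (fun i => c * g i) := hgs.mul_left c
    rw [← tsum_mul_left]
    exact (hcg.of_nonneg_of_le hf hfg).tsum_le_tsum hfg hcg
  · have hfs : ¬ Summable f := fun hfs => hgs (.of_nonneg_of_le hg hgf (hfs.mul_left c))
    rw [tsum_eq_zero_of_not_summable hfs, tsum_eq_zero_of_not_summable hgs, mul_zero]

noncomputable def coneOpTerm (p : ℕ+ → ℝ) (t β : ℝ) (w : ℝ → ℝ) (x : ℝ) (n : ℕ+) : ℝ :=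
  p n ^ t * ((x + ((n : ℕ) : ℝ)) ^ (2 * β))⁻¹ * w ((x + ((n : ℕ) : ℝ))⁻¹)

section TransferOperator

variable {p : ℕ+ → ℝ} {t β a e x y : ℝ} {w : ℝ → ℝ}

lemma one_le_coe_pnat (n : ℕ+) : (1 : ℝ) ≤ ((n : ℕ) : ℝ) := Nat.one_le_cast.mpr n.pos

lemma coneOpTerm_nonneg (hp : ∀ n, 0 ≤ p n) (hw0 : ∀ z ∈ Icc (0 : ℝ) 1, 0 ≤ w z) (hx : 0 ≤ x)
    (n : ℕ+) : 0 ≤ coneOpTerm p t β w x n := by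
  have hxn : 0 ≤ x + ((n : ℕ) : ℝ) := by linarith [one_le_coe_pnat n]
  exact mul_nonneg (mul_nonneg (rpow_nonneg (hp n) t) (inv_nonneg.mpr (rpow_nonneg hxn _)))
    (hw0 _ (inv_add_mem_Icc hx (one_le_coe_pnat n)))

lemma coneOp_nonneg (hp : ∀ n, 0 ≤ p n) (hw0 : ∀ z ∈ Icc (0 : ℝ) 1, 0 ≤ w z) (hx : 0 ≤ x) :
    0 ≤ coneOp p t β w x :=
  tsum_nonneg (coneOpTerm_nonneg hp hw0 hx)

lemma coneOpTerm_le_exp_mul (hp : ∀ n, 0 ≤ p n) (hβ0 : 0 ≤ β) (hβ1 : β ≤ 1)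
    (hw0 : ∀ z ∈ Icc (0 : ℝ) 1, 0 ≤ w z) (hx : 0 ≤ x) (hy : 0 ≤ y) {n : ℕ+}
    (hw : w (x + ((n : ℕ) : ℝ))⁻¹ ≤ exp e * w (y + ((n : ℕ) : ℝ))⁻¹) :
    coneOpTerm p t β w x n ≤ exp (2 * |x - y| + e) * coneOpTerm p t β w y n := by
  have hn := one_le_coe_pnat n
  have hweight : ((x + ((n : ℕ) : ℝ)) ^ (2 * β))⁻¹
      ≤ exp (2 * |x - y|) * ((y + ((n : ℕ) : ℝ)) ^ (2 * β))⁻¹ := by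
    refine (inv_rpow_le_exp_mul_inv_rpow (B := y + ((n : ℕ) : ℝ)) (by linarith) (by linarith)
      (by linarith)).trans ?_
    rw [add_sub_add_right_eq_sub]
    gcongr
    nlinarith [abs_nonneg (x - y)]
  calc coneOpTerm p t β w x n
      ≤ p n ^ t * (exp (2 * |x - y|) * ((y + ((n : ℕ) : ℝ)) ^ (2 * β))⁻¹)
          * (exp e * w (y + ((n : ℕ) : ℝ))⁻¹) := by
        have hpt : 0 ≤ p n ^ t := rpow_nonneg (hp n) t
        have hyw : 0 ≤ exp (2 * |x - y|) * ((y + ((n : ℕ) : ℝ)) ^ (2 * β))⁻¹ :=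
          mul_nonneg (exp_pos _).le (inv_nonneg.mpr (rpow_nonneg (by linarith) _))
        exact mul_le_mul (mul_le_mul_of_nonneg_left hweight hpt) hw
          (hw0 _ (inv_add_mem_Icc hx hn)) (mul_nonneg hpt hyw)
    _ = exp (2 * |x - y| + e) * coneOpTerm p t β w y n := by
        rw [coneOpTerm, exp_add]
        ring

lemma coneOp_le_exp_mul (hp : ∀ n, 0 ≤ p n) (hβ0 : 0 ≤ β) (hβ1 : β ≤ 1)
    (hw0 : ∀ z ∈ Icc (0 : ℝ) 1, 0 ≤ w z) (hx : 0 ≤ x) (hy : 0 ≤ y)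
    (hxy : ∀ n : ℕ+, w (x + ((n : ℕ) : ℝ))⁻¹ ≤ exp e * w (y + ((n : ℕ) : ℝ))⁻¹)
    (hyx : ∀ n : ℕ+, w (y + ((n : ℕ) : ℝ))⁻¹ ≤ exp e * w (x + ((n : ℕ) : ℝ))⁻¹) :
    coneOp p t β w x ≤ exp (2 * |x - y| + e) * coneOp p t β w y := by
  refine tsum_le_mul_tsum_of_le_mul (coneOpTerm_nonneg hp hw0 hx) (coneOpTerm_nonneg hp hw0 hy)
    (fun n => coneOpTerm_le_exp_mul hp hβ0 hβ1 hw0 hx hy (hxy n)) (fun n => ?_)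
  rw [abs_sub_comm]
  exact coneOpTerm_le_exp_mul hp hβ0 hβ1 hw0 hy hx (hyx n)

lemma coneOp_le_of_cone (ha : 0 ≤ a) (hp : ∀ n, 0 ≤ p n) (hβ0 : 0 ≤ β) (hβ1 : β ≤ 1)
    (hw0 : ∀ z ∈ Icc (0 : ℝ) 1, 0 ≤ w z)
    (hw : ∀ z ∈ Icc (0 : ℝ) 1, ∀ z' ∈ Icc (0 : ℝ) 1, w z ≤ exp (a * |z - z'|) * w z')
    (hx : 0 ≤ x) (hy : 0 ≤ y) :
    coneOp p t β w x ≤ exp (2 * |x - y| + a * |(x + 1)⁻¹ - (y + 1)⁻¹|) * coneOp p t β w y := by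
  have hbranch : ∀ {x y m : ℝ}, 0 ≤ x → 0 ≤ y → 1 ≤ m →
      w (x + m)⁻¹ ≤ exp (a * |(x + 1)⁻¹ - (y + 1)⁻¹|) * w (y + m)⁻¹ := by
    intro x y m hx hy hm
    refine (hw _ (inv_add_mem_Icc hx hm) _ (inv_add_mem_Icc hy hm)).trans ?_
    gcongr exp (_ * ?_) * _
    · exact hw0 _ (inv_add_mem_Icc hy hm)
    · exact abs_inv_add_sub_inv_add_le_of_le hx hy one_pos hm
  refine coneOp_le_exp_mul hp hβ0 hβ1 hw0 hx hy (fun n => hbranch hx hy (one_le_coe_pnat n))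
    fun n => ?_
  rw [abs_sub_comm]
  exact hbranch hy hx (one_le_coe_pnat n)

lemma coneOp_coneOp_le_of_cone (ha : 0 ≤ a) (hp : ∀ n, 0 ≤ p n) (hβ0 : 0 ≤ β) (hβ1 : β ≤ 1)
    (hw0 : ∀ z ∈ Icc (0 : ℝ) 1, 0 ≤ w z)
    (hw : ∀ z ∈ Icc (0 : ℝ) 1, ∀ z' ∈ Icc (0 : ℝ) 1, w z ≤ exp (a * |z - z'|) * w z')
    (hx : 0 ≤ x) (hy : 0 ≤ y) :
    coneOp p t β (coneOp p t β w) x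
      ≤ exp ((4 + a / 4) * |x - y|) * coneOp p t β (coneOp p t β w) y := by
  have hW0 : ∀ z ∈ Icc (0 : ℝ) 1, 0 ≤ coneOp p t β w z := fun z hz => coneOp_nonneg hp hw0 hz.1
  have hbranch : ∀ {x y m : ℝ}, 0 ≤ x → 0 ≤ y → 1 ≤ m → coneOp p t β w (x + m)⁻¹
      ≤ exp (2 * |x - y| + a * (|x - y| / 4)) * coneOp p t β w (y + m)⁻¹ := by
    intro x y m hx hy hm
    have hxm : 0 < x + m := by linarith
    have hym : 0 < y + m := by linarith
    have hdist : |(x + m)⁻¹ - (y + m)⁻¹| ≤ |x - y| := by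
      simpa using (abs_inv_add_sub_inv_add_le_of_le hx hy one_pos hm).trans
        (abs_inv_add_sub_inv_add_le_div hx hy one_pos)
    have hdist₂ : |((x + m)⁻¹ + 1)⁻¹ - ((y + m)⁻¹ + 1)⁻¹| ≤ |x - y| / 4 := by
      rw [inv_inv_add_one hxm, inv_inv_add_one hym, sub_sub_sub_cancel_left, abs_sub_comm,
        add_assoc, add_assoc]
      calc _ ≤ |x - y| / 2 ^ 2 :=
            (abs_inv_add_sub_inv_add_le_of_le hx hy two_pos (by linarith)).trans
              (abs_inv_add_sub_inv_add_le_div hx hy two_pos)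
        _ = |x - y| / 4 := by norm_num
    calc coneOp p t β w (x + m)⁻¹
        ≤ exp (2 * |(x + m)⁻¹ - (y + m)⁻¹| + a * |((x + m)⁻¹ + 1)⁻¹ - ((y + m)⁻¹ + 1)⁻¹|)
            * coneOp p t β w (y + m)⁻¹ :=
          coneOp_le_of_cone ha hp hβ0 hβ1 hw0 hw (inv_nonneg.mpr hxm.le) (inv_nonneg.mpr hym.le)
      _ ≤ exp (2 * |x - y| + a * (|x - y| / 4)) * coneOp p t β w (y + m)⁻¹ := by
          gcongr
          exact hW0 _ (inv_add_mem_Icc hy hm)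
  calc coneOp p t β (coneOp p t β w) x
      ≤ exp (2 * |x - y| + (2 * |x - y| + a * (|x - y| / 4)))
          * coneOp p t β (coneOp p t β w) y := by
        refine coneOp_le_exp_mul hp hβ0 hβ1 hW0 hx hy
          (fun n => hbranch hx hy (one_le_coe_pnat n)) fun n => ?_
        rw [abs_sub_comm]
        exact hbranch hy hx (one_le_coe_pnat n)
    _ = exp ((4 + a / 4) * |x - y|) * coneOp p t β (coneOp p t β w) y := by
        ring_nf

end TransferOperator

/-- **Uniform cone contraction** (from Lemma 4.11): there are `a > 0` and `λ ∈ (0,1)` such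
that for every probability vector `p`, every `t ∈ [0,1]` and `β ∈ (1/2, 1]`, the second
iterate `L²` of the transfer operator maps the cone
`C_a = {w ∈ C([0,1]) : w ≥ 0, w(x) ≤ e^{a|x-y|} w(y)}` into `C_{λa}`. -/
theorem cone_contraction :
    ∃ a : ℝ, 0 < a ∧ ∃ lam : ℝ, lam ∈ Set.Ioo (0 : ℝ) 1 ∧
      ∀ (p : ℕ+ → ℝ), IsProbVec p →
        ∀ t ∈ Set.Icc (0 : ℝ) 1, ∀ β ∈ Set.Ioc (1 / 2 : ℝ) 1,
          ∀ w : ℝ → ℝ, ContinuousOn w (Set.Icc 0 1) →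
            (∀ x ∈ Set.Icc (0 : ℝ) 1, 0 ≤ w x) →
            (∀ x ∈ Set.Icc (0 : ℝ) 1, ∀ y ∈ Set.Icc (0 : ℝ) 1,
              w x ≤ Real.exp (a * |x - y|) * w y) →
            ∀ x ∈ Set.Icc (0 : ℝ) 1, ∀ y ∈ Set.Icc (0 : ℝ) 1,
              coneOp p t β (coneOp p t β w) x ≤
                Real.exp (lam * a * |x - y|) * coneOp p t β (coneOp p t β w) y := by
  refine ⟨8, by norm_num, 3 / 4, ⟨by norm_num, by norm_num⟩, ?_⟩
  rintro p ⟨hp, -⟩ t - β ⟨hβ, hβ1⟩ w - hw0 hw x hx y hy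
  calc coneOp p t β (coneOp p t β w) x
      ≤ exp ((4 + 8 / 4) * |x - y|) * coneOp p t β (coneOp p t β w) y :=
        coneOp_coneOp_le_of_cone (by norm_num) hp (by linarith) hβ1 hw0 hw hx.1 hy.1
    _ = exp (3 / 4 * 8 * |x - y|) * coneOp p t β (coneOp p t β w) y := by norm_num
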